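/- Define Φ(x₁, x₂, y₁, y₂) = y₂(1 + x₁) + ((2x₁ + x₁²)y₁ + (x₂ + x₁x₂)y₁²)/(1 + x₁ + x₂y₁) for (x₁, x₂, y₁, y₂) ∈ ℝ⁴ with 1 + x₁ + x₂y₁ ≠ 0. Then for all x₁, x₂, y₁, y₂ with |x₁|, |x₂| ≤ 0.1 and |y₁|, |y₂| ≤ 1: the first and second partial derivatives of Φ with respect to y₁ equal ∂Φ/∂y₁ = (1 + x₁)(x₁² + 2x₁ + 2x₂(1 + x₁)y₁ + x₂²y₁²)/(1 + x₁ + x₂y₁)² and ∂²Φ/∂y₁² = 2(1 + x₁)x₂/(1 + x₁ + x₂y₁)³; moreover there is an absolute constant C ≥ 1 such that C^{−1}·max(|x₁|, |x₂|) ≤ |∂Φ/∂y₁| + |∂²Φ/∂y₁²| ≤ C·max(|x₁|, |x₂|). -/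

import Mathlib

/-!
With `a = 1 + x₁` and `D = 1 + x₁ + x₂ y₁ = a + x₂ y₁`, the numerator of the first derivative is
`D² - 1`, so `∂Φ/∂y₁ = (D - 1) · a(D + 1)/D²` and `∂²Φ/∂y₁² = x₂ · 2a/D³`. On the region both
factors `a(D + 1)/D²` and `2a/D³` lie in `[1, 5]`, while `|x₁| - |x₂| ≤ |D - 1| ≤ |x₁| + |x₂|`.
Hence the sum of the two absolute values is at least `max(|x₂|, |D - 1| + |x₂|) ≥ max(|x₁|, |x₂|)`
and at most `5 (|D - 1| + |x₂|) ≤ 15 max(|x₁|, |x₂|)`.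
-/

noncomputable section

/-- The defining function
`Φ(x₁,x₂,y₁,y₂) = y₂(1+x₁) + ((2x₁+x₁²)y₁ + (x₂+x₁x₂)y₁²)/(1+x₁+x₂y₁)`
(defined by this formula wherever the denominator is nonzero). -/
noncomputable def Phi (x₁ x₂ y₁ y₂ : ℝ) : ℝ :=
  y₂ * (1 + x₁) + ((2 * x₁ + x₁ ^ 2) * y₁ + (x₂ + x₁ * x₂) * y₁ ^ 2) / (1 + x₁ + x₂ * y₁)

open Topology

lemma HasDerivAt.mul_sq_sub_one_div_sq {f : ℝ → ℝ} {f' y : ℝ} (hf : HasDerivAt f f' y)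
    (a : ℝ) (hy : f y ≠ 0) :
    HasDerivAt (fun t => a * (f t ^ 2 - 1) / f t ^ 2) (2 * a * f' / f y ^ 3) y := by
  have hsq := hf.fun_pow 2
  refine (((hsq.sub_const 1).const_mul a).div hsq (pow_ne_zero 2 hy)).congr_deriv ?_
  simp only [Nat.cast_ofNat]
  field_simp
  ring

section Derivatives

variable {x₁ x₂ y : ℝ}

lemma hasDerivAt_Phi (y₂ : ℝ) (hD : 1 + x₁ + x₂ * y ≠ 0) :
    HasDerivAt (fun t => Phi x₁ x₂ t y₂)
      ((1 + x₁) * ((1 + x₁ + x₂ * y) ^ 2 - 1) / (1 + x₁ + x₂ * y) ^ 2) y := by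
  have hden : HasDerivAt (fun t => 1 + x₁ + x₂ * t) x₂ y := by
    simpa using ((hasDerivAt_id y).const_mul x₂).const_add (1 + x₁)
  have hnum := ((hasDerivAt_id' y).const_mul (2 * x₁ + x₁ ^ 2)).fun_add
    ((hasDerivAt_pow 2 y).const_mul (x₂ + x₁ * x₂))
  refine ((hnum.div hden hD).const_add (y₂ * (1 + x₁))).congr_deriv ?_
  field_simp
  ring

lemma deriv_Phi (y₂ : ℝ) (hD : 1 + x₁ + x₂ * y ≠ 0) :
    deriv (fun t => Phi x₁ x₂ t y₂) y =
      (1 + x₁) * ((1 + x₁ + x₂ * y) ^ 2 - 1) / (1 + x₁ + x₂ * y) ^ 2 :=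
  (hasDerivAt_Phi y₂ hD).deriv

lemma deriv_deriv_Phi (y₂ : ℝ) (hD : 1 + x₁ + x₂ * y ≠ 0) :
    deriv (deriv fun t => Phi x₁ x₂ t y₂) y = 2 * (1 + x₁) * x₂ / (1 + x₁ + x₂ * y) ^ 3 := by
  have hnear : deriv (fun t => Phi x₁ x₂ t y₂) =ᶠ[𝓝 y]
      fun t => (1 + x₁) * ((1 + x₁ + x₂ * t) ^ 2 - 1) / (1 + x₁ + x₂ * t) ^ 2 := by
    have hcont : Continuous fun t => 1 + x₁ + x₂ * t := by fun_prop
    filter_upwards [hcont.continuousAt.eventually_ne hD] with t ht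
    exact deriv_Phi y₂ ht
  have hden : HasDerivAt (fun t => 1 + x₁ + x₂ * t) x₂ y := by
    simpa using ((hasDerivAt_id y).const_mul x₂).const_add (1 + x₁)
  rw [hnear.deriv_eq, (hden.mul_sq_sub_one_div_sq (1 + x₁) hD).deriv]

end Derivatives

section Bounds

variable {a D : ℝ}

lemma abs_mul_sq_sub_one_div_sq_bounds (ha : |a - 1| ≤ 0.1) (hD : |D - 1| ≤ 0.2) :
    |D - 1| ≤ |a * (D ^ 2 - 1) / D ^ 2| ∧ |a * (D ^ 2 - 1) / D ^ 2| ≤ 5 * |D - 1| := by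
  obtain ⟨ha₁, ha₂⟩ := abs_le.mp ha
  obtain ⟨hD₁, hD₂⟩ := abs_le.mp hD
  have hD₀ : 0 < D ^ 2 := pow_pos (by linarith) 2
  have hfactor : a * (D ^ 2 - 1) / D ^ 2 = (D - 1) * (a * (D + 1) / D ^ 2) := by
    field_simp
    ring
  have hlow : 1 ≤ a * (D + 1) / D ^ 2 := by
    rw [le_div_iff₀ hD₀]
    nlinarith
  have hup : a * (D + 1) / D ^ 2 ≤ 5 := by
    rw [div_le_iff₀ hD₀]
    nlinarith
  rw [hfactor, abs_mul, abs_of_pos (by linarith : 0 < a * (D + 1) / D ^ 2)]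
  exact ⟨le_mul_of_one_le_right (abs_nonneg _) hlow,
    by nlinarith [mul_le_mul_of_nonneg_left hup (abs_nonneg (D - 1))]⟩

lemma abs_two_mul_mul_div_cube_bounds (x : ℝ) (ha : |a - 1| ≤ 0.1) (hD : |D - 1| ≤ 0.2) :
    |x| ≤ |2 * a * x / D ^ 3| ∧ |2 * a * x / D ^ 3| ≤ 5 * |x| := by
  obtain ⟨ha₁, ha₂⟩ := abs_le.mp ha
  obtain ⟨hD₁, hD₂⟩ := abs_le.mp hD
  have hD₀ : 0 < D ^ 3 := pow_pos (by linarith) 3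
  have hfactor : 2 * a * x / D ^ 3 = x * (2 * a / D ^ 3) := by ring
  have hlow : 1 ≤ 2 * a / D ^ 3 := by
    rw [le_div_iff₀ hD₀]
    nlinarith [pow_le_pow_left₀ (by linarith : (0 : ℝ) ≤ D) (by linarith : D ≤ 1.2) 3]
  have hup : 2 * a / D ^ 3 ≤ 5 := by
    rw [div_le_iff₀ hD₀]
    nlinarith [pow_le_pow_left₀ (by norm_num : (0 : ℝ) ≤ 0.8) (by linarith : 0.8 ≤ D) 3]
  rw [hfactor, abs_mul, abs_of_pos (by linarith : 0 < 2 * a / D ^ 3)]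
  exact ⟨le_mul_of_one_le_right (abs_nonneg _) hlow,
    by nlinarith [mul_le_mul_of_nonneg_left hup (abs_nonneg x)]⟩

end Bounds

lemma abs_add_mul_bounds {x₁ x₂ y : ℝ} (hy : |y| ≤ 1) :
    |x₁| - |x₂| ≤ |x₁ + x₂ * y| ∧ |x₁ + x₂ * y| ≤ |x₁| + |x₂| := by
  have hx₂y : |x₂ * y| ≤ |x₂| := by
    rw [abs_mul]
    exact mul_le_of_le_one_right (abs_nonneg x₂) hy
  constructor
  · have h := abs_sub (x₁ + x₂ * y) (x₂ * y)
    rw [add_sub_cancel_right] at h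
    linarith
  · linarith [abs_add_le x₁ (x₂ * y)]

/-- on the region `|x₁|, |x₂| ≤ 0.1`, `|y₁|, |y₂| ≤ 1`, the first and
second partial derivatives of `Φ` in `y₁` are given by the stated formulas, and there is
an absolute constant `C ≥ 1` such that
`C⁻¹ max(|x₁|,|x₂|) ≤ |∂Φ/∂y₁| + |∂²Φ/∂y₁²| ≤ C max(|x₁|,|x₂|)`. -/
theorem statement8 :
    ∃ C : ℝ, 1 ≤ C ∧
      ∀ x₁ x₂ y₁ y₂ : ℝ, |x₁| ≤ 0.1 → |x₂| ≤ 0.1 → |y₁| ≤ 1 → |y₂| ≤ 1 →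
        deriv (fun y => Phi x₁ x₂ y y₂) y₁ =
          (1 + x₁) * (x₁ ^ 2 + 2 * x₁ + 2 * x₂ * (1 + x₁) * y₁ + x₂ ^ 2 * y₁ ^ 2) /
            (1 + x₁ + x₂ * y₁) ^ 2 ∧
        deriv (deriv (fun y => Phi x₁ x₂ y y₂)) y₁ =
          2 * (1 + x₁) * x₂ / (1 + x₁ + x₂ * y₁) ^ 3 ∧
        C⁻¹ * max |x₁| |x₂| ≤
          |deriv (fun y => Phi x₁ x₂ y y₂) y₁| +
            |deriv (deriv (fun y => Phi x₁ x₂ y y₂)) y₁| ∧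
        |deriv (fun y => Phi x₁ x₂ y y₂) y₁| +
            |deriv (deriv (fun y => Phi x₁ x₂ y y₂)) y₁| ≤
          C * max |x₁| |x₂| := by
  refine ⟨15, by norm_num, fun x₁ x₂ y₁ y₂ hx₁ hx₂ hy₁ _ => ?_⟩
  obtain ⟨hdist₁, hdist₂⟩ := abs_add_mul_bounds (x₁ := x₁) (x₂ := x₂) hy₁
  have hD_sub : 1 + x₁ + x₂ * y₁ - 1 = x₁ + x₂ * y₁ := by ring
  rw [← hD_sub] at hdist₁ hdist₂
  have ha : |1 + x₁ - 1| ≤ 0.1 := by simpa using hx₁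
  have hD : |1 + x₁ + x₂ * y₁ - 1| ≤ 0.2 := by linarith
  have hD₀ : 1 + x₁ + x₂ * y₁ ≠ 0 := by linarith [(abs_le.mp hD).1]
  obtain ⟨h₁, h₁'⟩ := abs_mul_sq_sub_one_div_sq_bounds ha hD
  obtain ⟨h₂, h₂'⟩ := abs_two_mul_mul_div_cube_bounds x₂ ha hD
  have hnum : x₁ ^ 2 + 2 * x₁ + 2 * x₂ * (1 + x₁) * y₁ + x₂ ^ 2 * y₁ ^ 2 =
      (1 + x₁ + x₂ * y₁) ^ 2 - 1 := by ring
  rw [hnum, deriv_Phi y₂ hD₀, deriv_deriv_Phi y₂ hD₀]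
  refine ⟨rfl, rfl, ?_, ?_⟩
  · rw [inv_mul_le_iff₀ (by norm_num)]
    refine (max_le ?_ ?_).trans (le_mul_of_one_le_left ?_ (by norm_num)) <;>
      linarith [abs_nonneg (1 + x₁ + x₂ * y₁ - 1)]
  · linarith [le_max_left |x₁| |x₂|, le_max_right |x₁| |x₂|]
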